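/- arXiv:2302.07175 — 2 statements merged into one kernel-verified Lean document; each statement's English description precedes it below -/
import Mathlib

section
/- The maps Â_i(A) = A_i − (1/2) θ^{kj} A_k (∂_j A_i + F_{ji}) and λ̂(λ, A) = λ + (1/2) θ^{ij} (∂_i λ) A_j, where F_{ji} = ∂_j A_i − ∂_i A_j, satisfy the Seiberg-Witten equation Â_i(A + ∂λ) − Â_i(A) = ∂_i λ̂ + [Â_i, λ̂]⋆ up to terms of order θ², for infinitesimal λ (i.e., working to first order in λ and first order in θ). -/
open MvPolynomial

/- The first-order Seiberg-Witten map satisfies the SW equation up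
to terms of order θ² and λ².  We work in `MvPolynomial (Fin n ⊕ Fin 2) ℝ`:
the extra variables `u = X (inr 0)` and `v = X (inr 1)` are formal bookkeeping
parameters multiplying `θ` and `λ` respectively, and "up to O(θ²), first order
in λ" means membership in the ideal generated by `u²` and `v²`. -/

variable (n : ℕ)

abbrev P2 (n : ℕ) := MvPolynomial (Fin n ⊕ Fin 2) ℝ

noncomputable def uu (n : ℕ) : P2 n := X (Sum.inr 0)
noncomputable def vv (n : ℕ) : P2 n := X (Sum.inr 1)
noncomputable def emb (n : ℕ) : MvPolynomial (Fin n) ℝ →ₐ[ℝ] P2 n := rename Sum.inl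
noncomputable def pd (n : ℕ) (i : Fin n) : P2 n → P2 n := fun f => pderiv (Sum.inl i) f

/-- `Â_i(B) = B_i − (1/2)θ^{kj} B_k(∂_j B_i + F_{ji})`, `F_{ji} = ∂_j B_i − ∂_i B_j`
(the θ-term carries the formal parameter `u`). -/
noncomputable def hatA (θ : Matrix (Fin n) (Fin n) ℝ) (B : Fin n → P2 n) (i : Fin n) :
    P2 n :=
  B i - (1 / 2 : ℝ) • (uu n * ∑ k : Fin n, ∑ j : Fin n,
    θ k j • (B k * (pd n j (B i) + (pd n j (B i) - pd n i (B j)))))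

/-- `λ̂(λ,A) = λ + (1/2)θ^{ij}(∂_iλ) A_j` (`λ` carries `v`, the θ-term `u·v`). -/
noncomputable def hatLam (θ : Matrix (Fin n) (Fin n) ℝ)
    (A : Fin n → MvPolynomial (Fin n) ℝ) (lam : MvPolynomial (Fin n) ℝ) : P2 n :=
  vv n * emb n lam + (1 / 2 : ℝ) • (uu n * vv n * ∑ i : Fin n, ∑ j : Fin n,
    θ i j • (pd n i (emb n lam) * emb n (A j)))

/-- First order in θ of the star commutator: `[x,y]_⋆ = θ^{ij}∂_i x ∂_j y + O(θ²)`. -/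
noncomputable def brk1 (θ : Matrix (Fin n) (Fin n) ℝ) (x y : P2 n) : P2 n :=
  uu n * ∑ i : Fin n, ∑ j : Fin n, θ i j • (pd n i x * pd n j y)

/-!
Modulo `u²` and `v²`, shifting `A` by `v ∂λ` changes `Â_i` by
`v ∂_iλ − (uv/2) θ^{kj} (A_k ∂_i∂_jλ + ∂_kλ (2∂_jA_i − ∂_iA_j))` (using `∂_j∂_iλ = ∂_i∂_jλ`),
`∂_i λ̂ = v ∂_iλ + (uv/2) θ^{kj} (∂_i∂_kλ A_j + ∂_kλ ∂_iA_j)`, and since the bracket carries a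
factor `u`, only `uv θ^{kj} ∂_kA_i ∂_jλ` survives from it. The remaining first-order terms add up to
`θ^{kj} (h_kj + h_jk)` with `h_kj = ½ ∂_i∂_jλ A_k + ∂_kλ ∂_jA_i`, which vanishes because `θ` is
antisymmetric.
-/

theorem MvPolynomial.pderiv_comm {R σ : Type*} [CommRing R] (a b : σ) (f : MvPolynomial σ R) :
    pderiv a (pderiv b f) = pderiv b (pderiv a f) := by
  classical
  have h : ⁅pderiv a, pderiv b⁆ = (0 : Derivation R (MvPolynomial σ R) (MvPolynomial σ R)) :=
    derivation_ext fun c => by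
      rw [Derivation.commutator_apply]
      simp [Pi.single_apply, apply_ite]
  rw [← sub_eq_zero, ← Derivation.commutator_apply, h, Derivation.zero_apply]

theorem sum_smul_add_swap_eq_zero_of_antisymm {ι R M : Type*} [Fintype ι] [Ring R]
    [AddCommGroup M] [Module R M] (θ : Matrix ι ι R) (hθ : ∀ i j, θ j i = -θ i j)
    (h : ι → ι → M) :
    ∑ k, ∑ j, θ k j • (h k j + h j k) = 0 := by
  have hswap : ∑ k, ∑ j, θ k j • h j k = -∑ k, ∑ j, θ k j • h k j := by
    rw [Finset.sum_comm, ← Finset.sum_neg_distrib]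
    refine Finset.sum_congr rfl fun k _ => ?_
    rw [← Finset.sum_neg_distrib]
    exact Finset.sum_congr rfl fun j _ => by rw [hθ, neg_smul]
  simp only [smul_add, Finset.sum_add_distrib, hswap, add_neg_cancel]

section
variable {n}

lemma pd_add (j : Fin n) (f g : P2 n) : pd n j (f + g) = pd n j f + pd n j g := map_add _ _ _
lemma pd_smul (j : Fin n) (r : ℝ) (f : P2 n) : pd n j (r • f) = r • pd n j f :=
  (pderiv (R := ℝ) (Sum.inl j)).toLinearMap.map_smul r f
lemma pd_mul (j : Fin n) (f g : P2 n) : pd n j (f * g) = pd n j f * g + f * pd n j g :=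
  pderiv_mul
lemma pd_sum (j : Fin n) {α : Type*} (s : Finset α) (f : α → P2 n) :
    pd n j (∑ x ∈ s, f x) = ∑ x ∈ s, pd n j (f x) := map_sum _ _ _
lemma pd_uu (j : Fin n) : pd n j (uu n) = 0 := pderiv_X_of_ne Sum.inr_ne_inl
lemma pd_vv (j : Fin n) : pd n j (vv n) = 0 := pderiv_X_of_ne Sum.inr_ne_inl
lemma pd_comm (a b : Fin n) (f : P2 n) : pd n a (pd n b f) = pd n b (pd n a f) :=
  pderiv_comm _ _ f

variable (θ : Matrix (Fin n) (Fin n) ℝ)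

lemma hatA_eq_add_uu_mul (B : Fin n → P2 n) (i : Fin n) :
    hatA n θ B i = B i + uu n * (-(1 / 2 : ℝ) • ∑ k, ∑ j, θ k j •
      (B k * (pd n j (B i) + (pd n j (B i) - pd n i (B j))))) := by
  rw [hatA, mul_smul_comm, neg_smul, ← sub_eq_add_neg]

lemma hatLam_eq_add_uu_mul (A : Fin n → MvPolynomial (Fin n) ℝ) (lam : MvPolynomial (Fin n) ℝ) :
    hatLam n θ A lam = vv n * emb n lam + uu n * ((1 / 2 : ℝ) • (vv n * ∑ i, ∑ j, θ i j •
      (pd n i (emb n lam) * emb n (A j)))) := by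
  rw [hatLam, mul_smul_comm, mul_assoc]

lemma hatA_add_vv_mul_pd_sub_mem (B : Fin n → P2 n) (L : P2 n) (i : Fin n) :
    hatA n θ (fun k => B k + vv n * pd n k L) i
      - (hatA n θ B i + vv n * pd n i L
        - (1 / 2 : ℝ) • (uu n * vv n * ∑ k, ∑ j, θ k j •
            (pd n i (pd n j L) * B k + pd n k L * (2 * pd n j (B i) - pd n i (B j)))))
      ∈ Ideal.span {vv n ^ 2} := by
  refine Ideal.mem_span_singleton'.mpr
    ⟨-((1 / 2 : ℝ) • (uu n * ∑ k, ∑ j, θ k j • (pd n k L * pd n i (pd n j L)))), ?_⟩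
  have hsum : ∑ k, ∑ j, θ k j • ((B k + vv n * pd n k L) * (pd n j (B i + vv n * pd n i L)
        + (pd n j (B i + vv n * pd n i L) - pd n i (B j + vv n * pd n j L))))
      = ∑ k, ∑ j, θ k j • (B k * (pd n j (B i) + (pd n j (B i) - pd n i (B j))))
        + vv n * ∑ k, ∑ j, θ k j •
            (pd n i (pd n j L) * B k + pd n k L * (2 * pd n j (B i) - pd n i (B j)))
        + vv n ^ 2 * ∑ k, ∑ j, θ k j • (pd n k L * pd n i (pd n j L)) := by
    simp only [Finset.mul_sum, ← Finset.sum_add_distrib]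
    refine Finset.sum_congr rfl fun k _ => Finset.sum_congr rfl fun j _ => ?_
    simp only [pd_add, pd_mul, pd_vv, zero_mul, zero_add, pd_comm j i, Algebra.smul_def]
    ring
  simp only [hatA]
  rw [hsum]
  simp only [Algebra.smul_def]
  ring

lemma pd_hatLam (A : Fin n → MvPolynomial (Fin n) ℝ) (lam : MvPolynomial (Fin n) ℝ) (i : Fin n) :
    pd n i (hatLam n θ A lam)
      = vv n * pd n i (emb n lam) + (1 / 2 : ℝ) • (uu n * vv n * ∑ k, ∑ j, θ k j •
          (pd n i (pd n k (emb n lam)) * emb n (A j) + pd n k (emb n lam) * pd n i (emb n (A j)))) := by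
  simp only [hatLam, pd_add, pd_smul, pd_mul, pd_sum, pd_uu, pd_vv, zero_mul, mul_zero, zero_add,
    add_zero]

lemma brk1_sub_mem_of_eq_add_uu_mul {x x' a y y' b : P2 n} (hx : x' = x + uu n * a)
    (hy : y' = vv n * y + uu n * b) :
    brk1 n θ x' y'
      - uu n * vv n * ∑ k, ∑ j, θ k j • (pd n k x * pd n j y) ∈ Ideal.span {uu n ^ 2} := by
  refine Ideal.mem_span_singleton'.mpr ⟨∑ k, ∑ j, θ k j •
    (pd n k a * pd n j (vv n * y + uu n * b) + pd n k x * pd n j b), ?_⟩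
  rw [hx, hy, eq_sub_iff_add_eq]
  simp only [brk1, Finset.mul_sum, Finset.sum_mul, ← Finset.sum_add_distrib]
  refine Finset.sum_congr rfl fun k _ => Finset.sum_congr rfl fun j _ => ?_
  simp only [pd_add, pd_mul, pd_uu, pd_vv, zero_mul, zero_add, Algebra.smul_def]
  ring

lemma first_order_terms_cancel (hθ : ∀ i j, θ j i = -θ i j) (B : Fin n → P2 n) (L : P2 n)
    (i : Fin n) :
    (1 / 2 : ℝ) • ∑ k, ∑ j, θ k j •
        (pd n i (pd n j L) * B k + pd n k L * (2 * pd n j (B i) - pd n i (B j)))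
      + (1 / 2 : ℝ) • ∑ k, ∑ j, θ k j • (pd n i (pd n k L) * B j + pd n k L * pd n i (B j))
      + ∑ k, ∑ j, θ k j • (pd n k (B i) * pd n j L) = 0 := by
  have hhalf : algebraMap ℝ (P2 n) (1 / 2) * 2 = 1 := by
    rw [← map_ofNat (algebraMap ℝ (P2 n)) 2, ← map_mul]
    norm_num
  rw [← sum_smul_add_swap_eq_zero_of_antisymm θ hθ
    fun k j => (1 / 2 : ℝ) • (pd n i (pd n j L) * B k) + pd n k L * pd n j (B i)]
  simp only [Finset.smul_sum, ← Finset.sum_add_distrib]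
  refine Finset.sum_congr rfl fun k _ => Finset.sum_congr rfl fun j _ => ?_
  simp only [Algebra.smul_def]
  linear_combination (algebraMap ℝ (P2 n) (θ k j) * pd n k L * pd n j (B i)) * hhalf

end

theorem seiberg_witten_first_order (θ : Matrix (Fin n) (Fin n) ℝ)
    (hθ : ∀ i j, θ j i = -θ i j)
    (A : Fin n → MvPolynomial (Fin n) ℝ) (lam : MvPolynomial (Fin n) ℝ) (i : Fin n) :
    hatA n θ (fun k => emb n (A k) + vv n * pd n k (emb n lam)) i
      - hatA n θ (fun k => emb n (A k)) i
      - (pd n i (hatLam n θ A lam)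
          + brk1 n θ (hatA n θ (fun k => emb n (A k)) i) (hatLam n θ A lam))
      ∈ Ideal.span {uu n ^ 2, vv n ^ 2} := by
  set B : Fin n → P2 n := fun k => emb n (A k)
  set L := emb n lam
  have hA := hatA_add_vv_mul_pd_sub_mem θ B L i
  have hbrk := brk1_sub_mem_of_eq_add_uu_mul θ (hatA_eq_add_uu_mul θ B i)
    (hatLam_eq_add_uu_mul θ A lam)
  have hcancel := first_order_terms_cancel θ hθ B L i
  convert (Ideal.span {uu n ^ 2, vv n ^ 2}).sub_mem (Ideal.span_mono (by simp) hA)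
    (Ideal.span_mono (by simp) hbrk) using 1
  rw [pd_hatLam]
  simp only [Algebra.smul_def] at hcancel ⊢
  linear_combination (-(uu n * vv n)) * hcancel
end

section
/- Let A and A' be dg-algebras and suppose f_1: A → A' is a chain map with f_1(1) = 1 (unital), and f_2,...,f_{l−1} are normal cochains (vanishing whenever any argument equals 1). Then the cochain Ψ_l[f_1,...,f_{l−1}] defined by Ψ_l(a_1,...,a_l) = Σ_{i=1}^{l−1} (−1)^{ā_1+⋯+ā_i} f_{l−1}(a_1,...,a_i a_{i+1},...,a_l) − Σ_{i=1}^{l−1}(−1)^{ā_1+⋯+ā_i} f_i(a_1,...,a_i) f_{l−i}(a_{i+1},...,a_l) is normal, i.e., vanishes whenever any argument a_k equals the unit 1 ∈ A. -/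
/-- Sign operator: `koszulSign s x = (−1)^s x`. -/
def koszulSign {A' : Type*} [Ring A'] (s : ℤ) (x : A') : A' := if Even s then x else -x

/-- The list obtained from `L` by multiplying the entries in positions `i` and
`i+1` (0-indexed). -/
def mergeAt {A : Type*} [Ring A] (L : List A) (i : ℕ) : List A :=
  L.take i ++ ((L.getD i 1 * L.getD (i + 1) 1) :: L.drop (i + 2))

lemma koszulSign_zero {A' : Type*} [Ring A'] (s : ℤ) : koszulSign s (0:A') = 0 := by
  simp [koszulSign]

lemma koszulSign_sub_one {A' : Type*} [Ring A'] (s : ℤ) (x : A') :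
    koszulSign (s - 1) x = - koszulSign s x := by
  simp only [koszulSign, Int.even_sub_one]
  by_cases h : Even s <;> simp [h]

lemma one_mem_take {A : Type*} [Ring A] {L : List A} {k n : ℕ} (hk : k < L.length)
    (h1 : L[k] = 1) (hkn : k < n) : (1:A) ∈ L.take n := by
  have hlt : k < (L.take n).length := by simp; omega
  have h2 : (L.take n)[k] = 1 := by rw [List.getElem_take]; exact h1
  exact h2 ▸ List.getElem_mem hlt

lemma one_mem_drop {A : Type*} [Ring A] {L : List A} {k n : ℕ} (hk : k < L.length)
    (h1 : L[k] = 1) (hkn : n ≤ k) : (1:A) ∈ L.drop n := by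
  have hlt : k - n < (L.drop n).length := by simp; omega
  have h2 : (L.drop n)[k - n] = 1 := by
    rw [List.getElem_drop]
    have : n + (k - n) = k := by omega
    simp only [this]; exact h1
  exact h2 ▸ List.getElem_mem hlt

lemma one_mem_mergeAt {A : Type*} [Ring A] {L : List A} {k i : ℕ} (hk : k < L.length)
    (h1 : L[k] = 1) (h : k < i ∨ i + 1 < k) : (1:A) ∈ mergeAt L i := by
  unfold mergeAt
  rcases h with h | h
  · exact List.mem_append_left _ (one_mem_take hk h1 h)
  · exact List.mem_append_right _ (List.mem_cons_of_mem _ (one_mem_drop hk h1 (by omega)))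

lemma mergeAt_length {A : Type*} [Ring A] (L : List A) (i : ℕ) (h : i + 2 ≤ L.length) :
    (mergeAt L i).length = L.length - 1 := by
  unfold mergeAt; simp; omega

lemma take_one_of_one {A : Type*} [Ring A] (L : List A) (h : 0 < L.length)
    (h0 : L[0]'h = 1) : L.take 1 = [(1:A)] := by
  rcases L with _ | ⟨a, T⟩
  · simp at h
  · simp at h0; simp [h0]

lemma mergeAt_zero {A : Type*} [Ring A] (L : List A) (h : 1 < L.length)
    (h0 : L[0]'(by omega) = 1) : mergeAt L 0 = L.drop 1 := by
  unfold mergeAt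
  rw [List.getD_eq_getElem _ _ (by omega : 0 < L.length),
      List.getD_eq_getElem _ _ (by omega : 0 + 1 < L.length), h0, one_mul,
      List.take_zero, List.nil_append]
  rw [List.drop_eq_getElem_cons h]

lemma drop_last_one {A : Type*} [Ring A] (L : List A) (h : 1 ≤ L.length)
    (h1 : L[L.length - 1]'(by omega) = 1) : L.drop (L.length - 1) = [(1:A)] := by
  rw [List.drop_eq_getElem_cons (by omega : L.length - 1 < L.length), h1]
  have h2 : L.length - 1 + 1 = L.length := by omega
  rw [h2, List.drop_length]

lemma mergeAt_last {A : Type*} [Ring A] (L : List A) (h : 2 ≤ L.length)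
    (h1 : L[L.length - 1]'(by omega) = 1) :
    mergeAt L (L.length - 2) = L.take (L.length - 1) := by
  unfold mergeAt
  have h3 : L.length - 2 + 1 = L.length - 1 := by omega
  rw [h3, List.getD_eq_getElem _ _ (by omega : L.length - 2 < L.length),
      List.getD_eq_getElem _ _ (by omega : L.length - 1 < L.length), h1, mul_one]
  have h4 : L.length - 2 + 2 = L.length := by omega
  rw [h4, List.drop_length]
  have ht : L.take (L.length - 2 + 1) = L.take (L.length - 2) ++ [L[L.length - 2]'(by omega)] := by
    rw [List.take_succ, List.getElem?_eq_getElem (by omega : L.length - 2 < L.length)]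
    rfl
  conv_rhs => rw [← h3]
  rw [ht]

lemma mergeAt_pred {A : Type*} [Ring A] (L : List A) (k : ℕ) (hk1 : 1 ≤ k)
    (hk : k + 1 < L.length) (h1 : L[k]'(by omega) = 1) : mergeAt L (k-1) = mergeAt L k := by
  obtain ⟨m, rfl⟩ : ∃ m, k = m + 1 := ⟨k - 1, by omega⟩
  unfold mergeAt
  simp only [Nat.add_sub_cancel]
  rw [List.getD_eq_getElem _ _ (by omega : m < L.length),
      List.getD_eq_getElem _ _ (by omega : m + 1 < L.length),
      List.getD_eq_getElem _ _ (by omega : m + 1 + 1 < L.length), h1, mul_one, one_mul]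
  have ht : L.take (m + 1) = L.take m ++ [L[m]'(by omega)] := by
    rw [List.take_succ, List.getElem?_eq_getElem (by omega : m < L.length)]
    rfl
  simp only [(by omega : m + 1 + 1 = m + 2), (by omega : m + 1 + 2 = m + 3)]
  rw [ht, List.append_assoc, List.singleton_append,
      List.drop_eq_getElem_cons (by omega : m + 2 < L.length)]
/-- The cochain `Ψ_l[f₁,…,f_{l−1}]` of Eq. (psi), evaluated on the tuple `L`
(of length `l`); `f` encodes the family `f_k` as a single function on lists and
`deg` is the grading of `A`, with `ā = deg a − 1`. -/
def Psi {A A' : Type*} [Ring A] [Ring A'] (deg : A → ℤ)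
    (f : List A → A') (L : List A) : A' :=
  ∑ i ∈ Finset.range (L.length - 1),
    koszulSign (∑ j ∈ Finset.range (i + 1), (deg (L.getD j 1) - 1))
      (f (mergeAt L i) - f (L.take (i + 1)) * f (L.drop (i + 1)))

/- STATEMENT 13: if `f₁` is unital and `f₂,…,f_{l−1}` are normal, then
`Ψ_l[f₁,…,f_{l−1}]` is normal: it vanishes whenever one of its arguments is `1`. -/
theorem Psi_normal {A A' : Type*} [Ring A] [Ring A'] (deg : A → ℤ)
    (f : List A → A') (l : ℕ)
    (hdeg1 : deg 1 = 0)
    (hunital : f [1] = 1)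
    (hnormal : ∀ L' : List A, 2 ≤ L'.length → L'.length ≤ l - 1 →
      (1 : A) ∈ L' → f L' = 0) :
    ∀ L : List A, L.length = l → (1 : A) ∈ L → Psi deg f L = 0 := by
  intro L hL hmem
  subst hL
  obtain ⟨k, hk, h1⟩ := List.getElem_of_mem hmem
  unfold Psi
  by_cases hk0 : k = 0
  · subst hk0
    apply Finset.sum_eq_zero
    intro i hi
    rw [Finset.mem_range] at hi
    rcases Nat.eq_zero_or_pos i with h0 | hpos
    · subst h0
      rw [mergeAt_zero L (by omega) h1, take_one_of_one L (by omega) h1, hunital,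
        one_mul, sub_self, koszulSign_zero]
    · have hm : f (mergeAt L i) = 0 :=
        hnormal _ (by rw [mergeAt_length L i (by omega)]; omega)
          (le_of_eq (mergeAt_length L i (by omega))) (one_mem_mergeAt hk h1 (Or.inl hpos))
      have ht : f (L.take (i + 1)) = 0 :=
        hnormal _ (by simp; omega) (by simp; omega) (one_mem_take hk h1 (by omega))
      rw [hm, ht, zero_mul, sub_zero, koszulSign_zero]
  · by_cases hkl : k = L.length - 1
    · subst hkl
      apply Finset.sum_eq_zero
      intro i hi
      rw [Finset.mem_range] at hi
      by_cases h0 : i = L.length - 2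
      · subst h0
        rw [mergeAt_last L (by omega) h1, (by omega : L.length - 2 + 1 = L.length - 1),
          drop_last_one L (by omega) h1, hunital, mul_one, sub_self, koszulSign_zero]
      · have hm : f (mergeAt L i) = 0 :=
          hnormal _ (by rw [mergeAt_length L i (by omega)]; omega)
            (le_of_eq (mergeAt_length L i (by omega))) (one_mem_mergeAt hk h1 (Or.inr (by omega)))
        have hd : f (L.drop (i + 1)) = 0 :=
          hnormal _ (by simp; omega) (by simp; omega) (one_mem_drop hk h1 (by omega))
        rw [hm, hd, mul_zero, sub_zero, koszulSign_zero]
    · -- middle case: 1 ≤ k ≤ L.length - 2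
      have hk1 : k - 1 ∈ Finset.range (L.length - 1) := by
        rw [Finset.mem_range]; omega
      rw [← Finset.add_sum_erase _ _ hk1]
      have hk2 : k ∈ (Finset.range (L.length - 1)).erase (k - 1) := by
        rw [Finset.mem_erase, Finset.mem_range]; omega
      rw [← Finset.add_sum_erase _ _ hk2]
      have hR : ∑ i ∈ ((Finset.range (L.length - 1)).erase (k - 1)).erase k,
          koszulSign (∑ j ∈ Finset.range (i + 1), (deg (L.getD j 1) - 1))
            (f (mergeAt L i) - f (L.take (i + 1)) * f (L.drop (i + 1))) = 0 := by
        apply Finset.sum_eq_zero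
        intro i hi
        rw [Finset.mem_erase, Finset.mem_erase, Finset.mem_range] at hi
        obtain ⟨hik, hik1, hilt⟩ := hi
        have hcase : i + 1 < k ∨ k < i := by omega
        have hm : f (mergeAt L i) = 0 :=
          hnormal _ (by rw [mergeAt_length L i (by omega)]; omega)
            (le_of_eq (mergeAt_length L i (by omega)))
            (one_mem_mergeAt hk h1 (Or.symm hcase))
        rcases hcase with hc | hc
        · have hd : f (L.drop (i + 1)) = 0 :=
            hnormal _ (by simp; omega) (by simp; omega) (one_mem_drop hk h1 (by omega))
          rw [hm, hd, mul_zero, sub_zero, koszulSign_zero]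
        · have ht : f (L.take (i + 1)) = 0 :=
            hnormal _ (by simp; omega) (by simp; omega) (one_mem_take hk h1 (by omega))
          rw [hm, ht, zero_mul, sub_zero, koszulSign_zero]
      rw [hR, add_zero]
      have e : k - 1 + 1 = k := by omega
      have hM : mergeAt L (k - 1) = mergeAt L k := mergeAt_pred L k (by omega) (by omega) h1
      have hdk : f (L.drop k) = 0 :=
        hnormal _ (by simp; omega) (by simp; omega) (one_mem_drop hk h1 (by omega))
      have htk : f (L.take (k + 1)) = 0 :=
        hnormal _ (by simp; omega) (by simp; omega) (one_mem_take hk h1 (by omega))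
      have hgd : L.getD k 1 = 1 := by rw [List.getD_eq_getElem _ _ hk, h1]
      rw [e, hM, hdk, htk, mul_zero, zero_mul, sub_zero,
        Finset.sum_range_succ, hgd, hdeg1]
      rw [show (∑ j ∈ Finset.range k, (deg (L.getD j 1) - 1)) + ((0:ℤ) - 1)
          = (∑ j ∈ Finset.range k, (deg (L.getD j 1) - 1)) - 1 by ring,
        koszulSign_sub_one]
      exact add_neg_cancel _
end
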